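/- Let A be a finite-dimensional ℤ/2ℤ-graded associative algebra over a field of characteristic zero with an odd invariant scalar product g, and let (e_μ), (e^μ) be homogeneous dual bases with g(e^μ, e_ν) = δ^μ_ν. Then for all homogeneous a, b ∈ A: Σ_μ (−1)^{|e^μ|(|a|+1)} e^μ·a·e_μ·b = (−1)^{(|a|+1)|b|} · b · Σ_μ (−1)^{|e^μ|(|a|+1)} e^μ·a·e_μ. -/

import Mathlib

/-!
For `Ω = Σ_μ s_μ e^μ a e_μ`, expand `e_μ b = Σ_ν g(e^ν, e_μ b) e_ν` and, using the dual expansion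
`x = Σ_μ g(x, e_μ) e^μ` and cyclicity `g(b e^ν, e_μ) = g(e^ν, e_μ b)`, also
`b e^ν = Σ_μ g(e^ν, e_μ b) e^μ`. Thus `Ω b` and `b Ω` are combinations of the `e^μ a e_ν` with
coefficients `s_μ G_νμ` and `s_ν G_νμ`, where `G_νμ = g(e^ν, e_μ b)`. As `g` is odd, `G_νμ ≠ 0`
forces `|e^μ| ≡ |e^ν| + |b|`, and for the signs `s_μ = (-1)^{|e^μ|(|a|+1)}` this gives
`s_μ = (-1)^{(|a|+1)|b|} s_ν`.
-/

/-- A finite-dimensional ℤ/2ℤ-graded associative algebra `A = A₀ ⊕ A₁` (possibly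
non-unital) with an odd invariant scalar product `g`: `g` is non-degenerate, vanishes on
`A₀ × A₀` and `A₁ × A₁`, is invariant (`g(ab,c) = g(a,bc)`) and supersymmetric (which,
given the vanishing on equal parities, amounts to plain symmetry). -/
structure OddFrob (k A : Type*) [Field k] [NonUnitalRing A] [Module k A]
    [SMulCommClass k A A] [IsScalarTower k A A] where
  A0 : Submodule k A
  A1 : Submodule k A
  compl : IsCompl A0 A1
  mul00 : ∀ x ∈ A0, ∀ y ∈ A0, x * y ∈ A0
  mul01 : ∀ x ∈ A0, ∀ y ∈ A1, x * y ∈ A1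
  mul10 : ∀ x ∈ A1, ∀ y ∈ A0, x * y ∈ A1
  mul11 : ∀ x ∈ A1, ∀ y ∈ A1, x * y ∈ A0
  g : A →ₗ[k] A →ₗ[k] k
  nondeg : ∀ x, (∀ y, g x y = 0) → x = 0
  zero00 : ∀ x ∈ A0, ∀ y ∈ A0, g x y = 0
  zero11 : ∀ x ∈ A1, ∀ y ∈ A1, g x y = 0
  invar : ∀ x y z, g (x * y) z = g x (y * z)
  symm : ∀ x y, g x y = g y x

variable {k A : Type*} [Field k] [NonUnitalRing A] [Module k A]
  [SMulCommClass k A A] [IsScalarTower k A A]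

/-- `a` is homogeneous of parity `p` (mod 2). -/
def OddFrob.Homog (S : OddFrob k A) (p : ℕ) (a : A) : Prop :=
  if p % 2 = 0 then a ∈ S.A0 else a ∈ S.A1

/-- Homogeneous dual bases `(e_μ)`, `(e^μ)` of `A`: `e^μ = f μ` is homogeneous of parity
`q μ`, `e_μ = e μ` of the opposite parity, and `g(e^μ, e_ν) = δ^μ_ν`. -/
def OddFrob.DualBases (S : OddFrob k A) {ι : Type*} [Fintype ι] [DecidableEq ι]
    (e : Module.Basis ι k A) (f : ι → A) (q : ι → ℕ) : Prop :=
  (∀ μ, S.Homog (q μ) (f μ)) ∧ (∀ μ, S.Homog (q μ + 1) (e μ)) ∧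
  (∀ μ ν, S.g (f μ) (e ν) = if μ = ν then 1 else 0)


namespace OddFrob

variable (S : OddFrob k A)

theorem g_mul_cyclic (x y z : A) : S.g (x * y) z = S.g y (z * x) := by
  rw [S.invar, S.symm, S.invar]

section DualBases

variable {S} {ι : Type*} [Fintype ι] [DecidableEq ι] {e : Module.Basis ι k A} {f : ι → A}

theorem sum_g_smul_right (hfe : ∀ μ ν, S.g (f μ) (e ν) = if μ = ν then 1 else 0) (y : A) :
    ∑ ν, S.g (f ν) y • e ν = y := by
  have hcoord : ∀ ν, S.g (f ν) = e.coord ν := fun ν =>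
    e.ext fun μ => by simp [hfe, Finsupp.single_apply, eq_comm]
  simp only [hcoord, Module.Basis.coord_apply, e.sum_repr]

theorem sum_g_smul_left (hfe : ∀ μ ν, S.g (f μ) (e ν) = if μ = ν then 1 else 0) (x : A) :
    ∑ μ, S.g x (e μ) • f μ = x := by
  rw [← sub_eq_zero]
  refine S.nondeg _ fun y => ?_
  calc S.g (∑ μ, S.g x (e μ) • f μ - x) y
      = S.g x (∑ μ, S.g (f μ) y • e μ) - S.g x y := by simp [map_sum, mul_comm]
    _ = 0 := by rw [sum_g_smul_right hfe, sub_self]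

theorem sum_smul_mul_mul_mul_eq_sum_sum
    (hfe : ∀ μ ν, S.g (f μ) (e ν) = if μ = ν then 1 else 0) (s : ι → k) (a b : A) :
    ∑ μ, s μ • (f μ * a * e μ * b) =
      ∑ μ, ∑ ν, (s μ * S.g (f ν) (e μ * b)) • (f μ * a * e ν) := by
  refine Finset.sum_congr rfl fun μ _ => ?_
  conv_lhs => rw [mul_assoc _ (e μ) b, ← sum_g_smul_right hfe (e μ * b)]
  simp only [Finset.mul_sum, Finset.smul_sum, mul_smul_comm, smul_smul]

theorem mul_sum_smul_mul_mul_eq_sum_sum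
    (hfe : ∀ μ ν, S.g (f μ) (e ν) = if μ = ν then 1 else 0) (s : ι → k) (a b : A) :
    b * ∑ μ, s μ • (f μ * a * e μ) =
      ∑ μ, ∑ ν, (s ν * S.g (f ν) (e μ * b)) • (f μ * a * e ν) := by
  rw [Finset.sum_comm, Finset.mul_sum]
  refine Finset.sum_congr rfl fun ν _ => ?_
  rw [mul_smul_comm, ← mul_assoc, ← mul_assoc, ← sum_g_smul_left hfe (b * f ν)]
  simp only [Finset.sum_mul, Finset.smul_sum, smul_mul_assoc, smul_smul, g_mul_cyclic]

theorem sum_smul_mul_mul_mul_eq_smul_mul_sum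
    (hfe : ∀ μ ν, S.g (f μ) (e ν) = if μ = ν then 1 else 0) {s : ι → k} {ε : k} (a : A)
    {b : A} (hs : ∀ μ ν, S.g (f ν) (e μ * b) ≠ 0 → s μ = ε * s ν) :
    ∑ μ, s μ • (f μ * a * e μ * b) = ε • (b * ∑ μ, s μ • (f μ * a * e μ)) := by
  rw [sum_smul_mul_mul_mul_eq_sum_sum hfe, mul_sum_smul_mul_mul_eq_sum_sum hfe, Finset.smul_sum]
  refine Finset.sum_congr rfl fun μ _ => ?_
  rw [Finset.smul_sum]
  refine Finset.sum_congr rfl fun ν _ => ?_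
  rw [smul_smul]
  by_cases hg : S.g (f ν) (e μ * b) = 0
  · simp [hg]
  · rw [hs μ ν hg, mul_assoc]

end DualBases

theorem Homog.mul {S : OddFrob k A} {p r : ℕ} {x y : A} (hx : S.Homog p x)
    (hy : S.Homog r y) : S.Homog (p + r) (x * y) := by
  unfold Homog at *
  rw [Nat.add_mod]
  rcases Nat.mod_two_eq_zero_or_one p with hp | hp <;>
    rcases Nat.mod_two_eq_zero_or_one r with hr | hr <;>
    simp only [hp, hr] at hx hy ⊢ <;> norm_num at hx hy ⊢
  · exact S.mul00 x hx y hy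
  · exact S.mul01 x hx y hy
  · exact S.mul10 x hx y hy
  · exact S.mul11 x hx y hy

theorem g_eq_zero_of_homog {p r : ℕ} {x y : A} (hx : S.Homog p x) (hy : S.Homog r y)
    (hpr : p % 2 = r % 2) : S.g x y = 0 := by
  unfold Homog at hx hy
  rcases Nat.mod_two_eq_zero_or_one p with hp | hp
  · rw [if_pos hp] at hx; rw [if_pos (hpr ▸ hp)] at hy
    exact S.zero00 x hx y hy
  · rw [if_neg (by omega)] at hx; rw [if_neg (by omega)] at hy
    exact S.zero11 x hx y hy

end OddFrob

theorem dual_bases_center_commutation_general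
    {k A : Type*} [Field k] [NonUnitalRing A] [Module k A]
    [SMulCommClass k A A] [IsScalarTower k A A]
    (S : OddFrob k A) {ι : Type*} [Fintype ι] [DecidableEq ι]
    (e : Module.Basis ι k A) (f : ι → A) (q : ι → ℕ) (hdb : S.DualBases e f q)
    (pa pb : ℕ) (a b : A) (hb : S.Homog pb b) :
    ∑ μ, (-1 : k) ^ (q μ * (pa + 1)) • (f μ * a * e μ * b) =
      (-1 : k) ^ ((pa + 1) * pb) •
        (b * ∑ μ, (-1 : k) ^ (q μ * (pa + 1)) • (f μ * a * e μ)) := by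
  obtain ⟨hf, he, hfe⟩ := hdb
  refine OddFrob.sum_smul_mul_mul_mul_eq_smul_mul_sum hfe a fun μ ν hg => ?_
  have hpar : q ν % 2 ≠ (q μ + 1 + pb) % 2 := fun h =>
    hg (S.g_eq_zero_of_homog (hf ν) ((he μ).mul hb) h)
  rw [← pow_add]
  refine neg_one_pow_congr ?_
  simp only [Nat.even_add, Nat.even_mul]
  simp only [Nat.even_iff]
  omega

/-- For homogeneous dual bases and homogeneous `a, b`:
`Σ_μ (−1)^{|e^μ|(|a|+1)} e^μ·a·e_μ·b = (−1)^{(|a|+1)|b|} b · Σ_μ (−1)^{|e^μ|(|a|+1)} e^μ·a·e_μ`. -/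
theorem dual_bases_center_commutation
    {k A : Type*} [Field k] [CharZero k] [NonUnitalRing A] [Module k A]
    [SMulCommClass k A A] [IsScalarTower k A A] [FiniteDimensional k A]
    (S : OddFrob k A) {ι : Type*} [Fintype ι] [DecidableEq ι]
    (e : Module.Basis ι k A) (f : ι → A) (q : ι → ℕ) (hdb : S.DualBases e f q)
    (pa pb : ℕ) (a b : A) (ha : S.Homog pa a) (hb : S.Homog pb b) :
    ∑ μ, (-1 : k) ^ (q μ * (pa + 1)) • (f μ * a * e μ * b) =
      (-1 : k) ^ ((pa + 1) * pb) •
        (b * ∑ μ, (-1 : k) ^ (q μ * (pa + 1)) • (f μ * a * e μ)) :=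
  dual_bases_center_commutation_general S e f q hdb pa pb a b hb
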